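/- For any orientation-preserving homeomorphism f of the circle, the polynomial entropy of the induced map C(f) on the hyperspace of subcontinua of S¹ is at most 2. -/

import Mathlib

open Filter TopologicalSpace Set

section PolyEntropy

variable {X : Type*} [PseudoMetricSpace X]

/-- The dynamic (Bowen) metric `d_n^f(x,y) = max_{0 ≤ k < n} d(f^k x, f^k y)`. -/
noncomputable def dynDist (f : X → X) (n : ℕ) (x y : X) : ℝ :=
  ⨆ k ∈ Finset.range n, dist (f^[k] x) (f^[k] y)

/-- `E` is `(n,ε)`-separated for `f`. -/
def IsDynSeparated (f : X → X) (n : ℕ) (ε : ℝ) (E : Set X) : Prop :=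
  ∀ x ∈ E, ∀ y ∈ E, x ≠ y → ε ≤ dynDist f n x y

/-- `sep(n,ε;Y)`: maximal cardinality of an `(n,ε)`-separated subset of `Y`. -/
noncomputable def sepCount (f : X → X) (Y : Set X) (n : ℕ) (ε : ℝ) : ℕ :=
  sSup {m | ∃ E : Finset X, ↑E ⊆ Y ∧ IsDynSeparated f n ε ↑E ∧ E.card = m}

/-- `span(n,ε;Y)`: minimal number of dynamic `ε`-balls covering `Y`. -/
noncomputable def spanCount (f : X → X) (Y : Set X) (n : ℕ) (ε : ℝ) : ℕ :=
  sInf {m | ∃ s : Finset X, s.card = m ∧ Y ⊆ ⋃ c ∈ s, {x | dynDist f n c x < ε}}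

/-- `cov(n,ε;Y)`: minimal number of sets of dynamic diameter `< ε` covering `Y`. -/
noncomputable def covCount (f : X → X) (Y : Set X) (n : ℕ) (ε : ℝ) : ℕ :=
  sInf {m | ∃ 𝒰 : Finset (Set X), 𝒰.card = m ∧
      (∀ U ∈ 𝒰, ∀ x ∈ U, ∀ y ∈ U, dynDist f n x y < ε) ∧ Y ⊆ ⋃₀ ↑𝒰}

/-- Polynomial entropy of `f` on the subset `Y`:
`lim_{ε→0} limsup_{n→∞} log sep(n,ε;Y) / log n` (the limit as `ε → 0⁺` being a
supremum over `ε > 0` by monotonicity). -/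
noncomputable def hpolOn (f : X → X) (Y : Set X) : EReal :=
  ⨆ ε : {ε : ℝ // 0 < ε},
    Filter.limsup (fun n : ℕ =>
      ((Real.log (sepCount f Y n ε) / Real.log n : ℝ) : EReal)) Filter.atTop

/-- Polynomial entropy of `f`. -/
noncomputable def hpol (f : X → X) : EReal := hpolOn f Set.univ

end PolyEntropy

section Hyperspace

variable {X : Type*} [TopologicalSpace X]

/-- The hyperspace `C(X)` of subcontinua (nonempty compact connected subsets) of `X`,
with the Hausdorff metric (inherited from `NonemptyCompacts X`). -/
def Subcontinua (X : Type*) [TopologicalSpace X] : Type _ :=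
  {A : NonemptyCompacts X // IsConnected (A : Set X)}

noncomputable instance {Y : Type*} [MetricSpace Y] : MetricSpace (Subcontinua Y) :=
  Subtype.metricSpace

instance : CoeSort (Subcontinua X) (Set X) := ⟨fun A => (A.1 : Set X)⟩

/-- The induced map `C(f) : C(X) → C(X)`, `A ↦ f(A)`. -/
def inducedC (f : X → X) (hf : Continuous f) : Subcontinua X → Subcontinua X :=
  fun A => ⟨⟨⟨f '' (A.1 : Set X), A.1.isCompact.image hf⟩, A.1.nonempty.image f⟩,
    A.2.image f hf.continuousOn⟩

/-- The induced map on the hyperspace of nonempty closed (= compact) subsets. -/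
def inducedNC {Y : Type*} [TopologicalSpace Y] (f : Y → Y) (hf : Continuous f) :
    NonemptyCompacts Y → NonemptyCompacts Y :=
  fun A => ⟨⟨f '' (A : Set Y), A.isCompact.image hf⟩, A.nonempty.image f⟩

end Hyperspace

section Circle

/-- `F : ℝ → ℝ` is an (orientation-preserving) lift of `f : S¹ → S¹`. -/
def IsLiftOf (F : ℝ → ℝ) (f : UnitAddCircle → UnitAddCircle) : Prop :=
  StrictMono F ∧ (∀ x, F (x + 1) = F x + 1) ∧ ∀ x : ℝ, f (x : UnitAddCircle) = (F x : UnitAddCircle)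

/-- `f` is an orientation-preserving circle map (has an increasing degree-one lift). -/
def OrientationPreserving (f : UnitAddCircle → UnitAddCircle) : Prop :=
  ∃ F : ℝ → ℝ, IsLiftOf F f

/-- `f` has Poincaré rotation number `ρ`. -/
def HasRotationNumber (f : UnitAddCircle → UnitAddCircle) (ρ : ℝ) : Prop :=
  ∃ F : ℝ → ℝ, IsLiftOf F f ∧
    Filter.Tendsto (fun n : ℕ => F^[n] 0 / n) Filter.atTop (nhds ρ)

/-- `f` is topologically conjugate to a rotation of the circle. -/
def ConjToRotation (f : UnitAddCircle → UnitAddCircle) : Prop :=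
  ∃ (φ : UnitAddCircle ≃ₜ UnitAddCircle) (a : UnitAddCircle), ∀ x, φ (f x) = φ x + a

/-- The non-wandering set of `f`. -/
def NW {X : Type*} [TopologicalSpace X] (f : X → X) : Set X :=
  {x | ∀ U ∈ nhds x, ∃ n : ℕ, 1 ≤ n ∧ (f^[n] '' U ∩ U).Nonempty}

/-- `C` is a Cantor set: nonempty, compact, perfect and totally disconnected. -/
def IsCantorSet {X : Type*} [TopologicalSpace X] (C : Set X) : Prop :=
  C.Nonempty ∧ IsCompact C ∧ Perfect C ∧ IsTotallyDisconnected C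

/-- The closed arc starting at `x`, going counterclockwise for length `t`. -/
noncomputable def arcFrom (x : UnitAddCircle) (t : ℝ) : Set UnitAddCircle :=
  (fun s : ℝ => x + (s : UnitAddCircle)) '' Set.Icc 0 t

end Circle

/-!
Lift `f` to an increasing degree-one map `F : ℝ → ℝ`. Every subcontinuum of the circle is the
projection of an interval `[a, b] ⊆ [-1, 1]`, its `k`-th image under `C(f)` is the projection of
`[F^k a, F^k b]`, and projections of intervals with `δ`-close endpoints are `δ`-close in the
Hausdorff metric. Hence two subcontinua are `(n, 1/N)`-close as soon as their endpoints have the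
same itinerary up to time `n` through the partition of `ℝ` into intervals of length `1/N`. As every
`F^k` is monotone, the itineraries of the points of `[-1, 1]` form a chain, along which the sum of
the entries strictly increases, so there are at most `2nN + 1` of them. Thus
`sep(n, ε; C(f)) ≤ (2nN + 1)²` once `1/N < ε`, and `h_pol(C(f)) ≤ 2`.
-/

section DynamicCounting

variable {X : Type*} [PseudoMetricSpace X] {f : X → X} {Y : Set X} {n : ℕ} {ε : ℝ}

lemma dynDist_le {x y : X} {c : ℝ} (hc : 0 ≤ c) (h : ∀ k < n, dist (f^[k] x) (f^[k] y) ≤ c) :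
    dynDist f n x y ≤ c :=
  Real.iSup_le (fun k => Real.iSup_le (fun hk => h k (Finset.mem_range.mp hk)) hc) hc

lemma sepCount_le_of_encard_image_le {ι : Type*} (φ : X → ι) {m : ℕ}
    (hm : (φ '' Y).encard ≤ m) (h : ∀ x ∈ Y, ∀ y ∈ Y, φ x = φ y → dynDist f n x y < ε) :
    sepCount f Y n ε ≤ m := by
  refine csSup_le' ?_
  rintro _ ⟨E, hEY, hE, rfl⟩
  have hinj : InjOn φ E := fun x hx y hy hxy => by
    by_contra hne
    exact (hE x hx y hy hne).not_gt (h x (hEY hx) y (hEY hy) hxy)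
  have : ((E : Set X).encard : ℕ∞) ≤ m :=
    calc (E : Set X).encard = (φ '' E).encard := (hinj.encard_image).symm
      _ ≤ (φ '' Y).encard := encard_le_encard (image_mono hEY)
      _ ≤ m := hm
  rwa [encard_coe_eq_coe_finsetCard, Nat.cast_le] at this

end DynamicCounting

lemma encard_image_le_of_monotoneOn {α ι : Type*} [LinearOrder α] [Fintype ι] {s : Set α}
    {c : α → ι → ℤ} (hc : MonotoneOn c s) (lo : ι → ℤ) (D : ℕ)
    (hbound : ∀ x ∈ s, ∀ i, lo i ≤ c x i ∧ c x i ≤ lo i + D) :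
    (c '' s).encard ≤ Fintype.card ι * D + 1 := by
  set σ : (ι → ℤ) → ℤ := fun v => ∑ i, v i
  -- `c '' s` is a chain, and `σ` is strictly monotone along chains.
  have hinj : InjOn σ (c '' s) := by
    rintro _ ⟨x, hx, rfl⟩ _ ⟨y, hy, rfl⟩ hxy
    wlog hle : x ≤ y generalizing x y
    · exact (this y hy x hx hxy.symm (le_of_not_ge hle)).symm
    funext i
    exact (Finset.sum_eq_sum_iff_of_le fun i _ => hc hx hy hle i).mp hxy i (Finset.mem_univ i)
  have hmaps : MapsTo σ (c '' s) (Icc (∑ i, lo i) (∑ i, lo i + Fintype.card ι * D)) := by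
    rintro _ ⟨x, hx, rfl⟩
    refine ⟨Finset.sum_le_sum fun i _ => (hbound x hx i).1, ?_⟩
    calc σ (c x) ≤ ∑ i, (lo i + D) := Finset.sum_le_sum fun i _ => (hbound x hx i).2
      _ = ∑ i, lo i + Fintype.card ι * D := by simp [Finset.sum_add_distrib]
  calc (c '' s).encard ≤ (Icc (∑ i, lo i) (∑ i, lo i + Fintype.card ι * D)).encard :=
        encard_le_encard_of_injOn hmaps hinj
    _ = Fintype.card ι * D + 1 := by
        rw [← Finset.coe_Icc, encard_coe_eq_coe_finsetCard, Int.card_Icc]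
        norm_cast
        omega

open Topology in
lemma limsup_log_div_log_le {a : ℕ → ℕ} {K : ℝ} {d : ℕ} (hK : 1 ≤ K)
    (h : ∀ᶠ n in atTop, (a n : ℝ) ≤ K * (n : ℝ) ^ d) :
    limsup (fun n : ℕ => ((Real.log (a n) / Real.log n : ℝ) : EReal)) atTop ≤ d := by
  have hlim : Tendsto (fun n : ℕ => ((Real.log K / Real.log n + d : ℝ) : EReal)) atTop
      (𝓝 ((0 + d : ℝ) : EReal)) :=
    EReal.tendsto_coe.2 <| (tendsto_const_nhds.div_atTop
      (Real.tendsto_log_atTop.comp tendsto_natCast_atTop_atTop)).add tendsto_const_nhds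
  have hle : ∀ᶠ n : ℕ in atTop,
      ((Real.log (a n) / Real.log n : ℝ) : EReal) ≤ ((Real.log K / Real.log n + d : ℝ) : EReal) := by
    filter_upwards [h, eventually_ge_atTop 2] with n hn hn2
    have hlogn : 0 < Real.log n := Real.log_pos (by exact_mod_cast hn2)
    have hlogK : 0 ≤ Real.log K := Real.log_nonneg hK
    have hlog : Real.log (a n) ≤ Real.log K + d * Real.log n := by
      rcases Nat.eq_zero_or_pos (a n) with h0 | h0
      · rw [h0, Nat.cast_zero, Real.log_zero]
        positivity
      · calc Real.log (a n) ≤ Real.log (K * (n : ℝ) ^ d) := Real.log_le_log (by exact_mod_cast h0) hn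
          _ = Real.log K + d * Real.log n := by
            rw [Real.log_mul (by positivity) (by positivity), Real.log_pow]
    refine EReal.coe_le_coe_iff.mpr ?_
    rwa [div_le_iff₀ hlogn, add_mul, div_mul_cancel₀ _ hlogn.ne']
  calc _ ≤ limsup (fun n : ℕ => ((Real.log K / Real.log n + d : ℝ) : EReal)) atTop :=
        limsup_le_limsup hle
    _ = d := by rw [hlim.limsup_eq, zero_add]; rfl

section Lift

variable {F : ℝ → ℝ} {g : UnitAddCircle → UnitAddCircle}

lemma IsLiftOf.iterate (hF : IsLiftOf F g) (k : ℕ) : IsLiftOf F^[k] g^[k] :=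
  ⟨hF.1.iterate k, Function.Commute.iterate_left (g := (· + 1)) hF.2.1 k,
    fun x => ((Function.Semiconj.iterate_right (f := ((↑) : ℝ → UnitAddCircle))
      (fun y => (hF.2.2 y).symm) k) x).symm⟩

lemma IsLiftOf.surjective (hF : IsLiftOf F g) (hg : g.Surjective) : F.Surjective := by
  intro y
  obtain ⟨z, hz⟩ := hg y
  obtain ⟨x, rfl⟩ := QuotientAddGroup.mk_surjective z
  have h0 : ((F x - y : ℝ) : UnitAddCircle) = 0 := by
    rw [AddCircle.coe_sub, sub_eq_zero, ← hF.2.2 x, hz]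
  obtain ⟨m, hm⟩ := (AddCircle.coe_eq_zero_iff (p := (1 : ℝ))).mp h0
  let L : CircleDeg1Lift := ⟨⟨F, hF.1.monotone⟩, hF.2.1⟩
  refine ⟨x - m, (L.map_sub_int x m).trans ?_⟩
  simp only [zsmul_eq_mul, mul_one] at hm
  change F x - m = y
  linarith

lemma IsLiftOf.image_image_Icc (hF : IsLiftOf F g) (hg : g.Surjective) (a b : ℝ) :
    g '' (((↑) : ℝ → UnitAddCircle) '' Icc a b) = (↑) '' Icc (F a) (F b) := by
  have hI : F '' Icc a b = Icc (F a) (F b) :=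
    (hF.1.orderIsoOfSurjective F (hF.surjective hg)).image_Icc a b
  rw [← hI, image_image, image_image]
  exact image_congr fun x _ => hF.2.2 x

end Lift

lemma exists_eq_image_Icc {A : Set UnitAddCircle} (hne : A.Nonempty) (hcpt : IsCompact A)
    (hconn : IsPreconnected A) :
    ∃ a b : ℝ, -1 ≤ a ∧ a ≤ b ∧ b ≤ 1 ∧ A = (↑) '' Icc a b := by
  by_cases hA : A = univ
  · refine ⟨0, 1, by norm_num, zero_le_one, le_rfl, ?_⟩
    rw [hA, eq_comm, ← univ_subset_iff, ← AddCircle.coe_image_Ico_eq (1 : ℝ) 0, zero_add]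
    exact image_mono Ico_subset_Icc_self
  -- Cut the circle at a point `p ∈ [-1, 0)` outside `A` and unroll `A` into `(p, p + 1)`.
  obtain ⟨x, hx⟩ := (ne_univ_iff_exists_notMem A).mp hA
  set p : ℝ := (AddCircle.equivIco 1 (-1) x : ℝ)
  have hp : p ∈ Ico (-1 : ℝ) (-1 + 1) := (AddCircle.equivIco 1 (-1) x).2
  set e := AddCircle.openPartialHomeomorphCoe (1 : ℝ) p
  have hAt : A ⊆ e.target := fun y hy (h : y = _) => hx (by
    rw [AddCircle.coe_equivIco] at h; exact h ▸ hy)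
  set B := e.symm '' A
  have hBs : B ⊆ Ioo p (p + 1) := (e.mapsTo_symm.mono_left hAt).image_subset
  have hBc : IsCompact B := hcpt.image_of_continuousOn (e.continuousOn_symm.mono hAt)
  have hBconn : IsConnected B := ⟨hne.image _, hconn.image _ (e.continuousOn_symm.mono hAt)⟩
  have hBne := hBconn.nonempty
  refine ⟨sInf B, sSup B, ?_, csInf_le_csSup hBne hBc.bddBelow hBc.bddAbove, ?_, ?_⟩
  · linarith [hp.1, (hBs (hBc.sInf_mem hBne)).1]
  · linarith [hp.2, (hBs (hBc.sSup_mem hBne)).2]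
  · rw [← eq_Icc_of_connected_compact hBconn hBc]
    exact (e.image_symm_image_of_subset_target hAt).symm

lemma exists_mem_Icc_abs_sub_le {a b c d x : ℝ} (hcd : c ≤ d) (hx : x ∈ Icc a b) :
    ∃ y ∈ Icc c d, |x - y| ≤ max |a - c| |b - d| := by
  refine ⟨max c (min d x), ⟨le_max_left _ _, max_le hcd (min_le_left _ _)⟩, ?_⟩
  rcases le_total x c with hxc | hcx
  · rw [max_eq_left (min_le_of_right_le hxc), abs_sub_comm x, abs_sub_comm a,
      abs_of_nonneg (sub_nonneg.2 hxc)]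
    exact le_max_of_le_left ((sub_le_sub_left hx.1 c).trans (le_abs_self _))
  rcases le_total x d with hxd | hdx
  · rw [min_eq_right hxd, max_eq_right hcx, sub_self, abs_zero]
    exact le_max_of_le_left (abs_nonneg _)
  · rw [min_eq_left hdx, max_eq_right hcd, abs_of_nonneg (sub_nonneg.2 hdx)]
    exact le_max_of_le_right ((sub_le_sub_right hx.2 d).trans (le_abs_self _))

lemma dist_coe_le_abs_sub (x y : ℝ) : dist (x : UnitAddCircle) y ≤ |x - y| := by
  rw [dist_eq_norm, ← AddCircle.coe_sub, ← Real.norm_eq_abs]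
  exact QuotientAddGroup.norm_mk_le_norm

lemma hausdorffDist_image_Icc_le {a b c d : ℝ} (hab : a ≤ b) (hcd : c ≤ d) :
    Metric.hausdorffDist (((↑) : ℝ → UnitAddCircle) '' Icc a b) ((↑) '' Icc c d) ≤
      max |a - c| |b - d| := by
  refine Metric.hausdorffDist_le_of_mem_dist (le_max_of_le_left (abs_nonneg _)) ?_ ?_
  · rintro _ ⟨x, hx, rfl⟩
    obtain ⟨y, hy, hxy⟩ := exists_mem_Icc_abs_sub_le hcd hx
    exact ⟨y, mem_image_of_mem _ hy, (dist_coe_le_abs_sub x y).trans hxy⟩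
  · rintro _ ⟨x, hx, rfl⟩
    obtain ⟨y, hy, hxy⟩ := exists_mem_Icc_abs_sub_le hab hx
    refine ⟨y, mem_image_of_mem _ hy, (dist_coe_le_abs_sub x y).trans ?_⟩
    rwa [abs_sub_comm a, abs_sub_comm b]

lemma coe_inducedC_iterate {X : Type*} [TopologicalSpace X] (f : X → X) (hf : Continuous f)
    (k : ℕ) (A : Subcontinua X) :
    (((inducedC f hf)^[k] A).1 : Set X) = f^[k] '' A.1 := by
  rw [image_iterate_eq]
  exact Function.Semiconj.iterate_right (f := fun A : Subcontinua X => (A.1 : Set X))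
    (fun _ => rfl) k A

noncomputable def itinerary (F : ℝ → ℝ) (N n : ℕ) (x : ℝ) : Fin n → ℤ :=
  fun k => ⌊N * F^[k] x⌋

lemma abs_iterate_sub_lt_of_itinerary_eq {F : ℝ → ℝ} {N n : ℕ} (hN : 0 < N) {x y : ℝ}
    (h : itinerary F N n x = itinerary F N n y) (k : Fin n) :
    |F^[k] x - F^[k] y| < 1 / N := by
  have hN' : (0 : ℝ) < N := by exact_mod_cast hN
  have := Int.abs_sub_lt_one_of_floor_eq_floor (congrFun h k)
  rwa [← mul_sub, abs_mul, abs_of_pos hN', ← lt_div_iff₀' hN'] at this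

lemma encard_itinerary_image_le {F : ℝ → ℝ} {g : UnitAddCircle → UnitAddCircle}
    (hF : IsLiftOf F g) (N n : ℕ) :
    (itinerary F N n '' Icc (-1) 1).encard ≤ n * (2 * N) + 1 := by
  have hmono : ∀ k : ℕ, Monotone F^[k] := fun k => (hF.1.iterate k).monotone
  have hone : ∀ k : ℕ, F^[k] 1 = F^[k] (-1) + 2 := fun k => by
    have h := (hF.iterate k).2.1
    have h2 := h (-1 + 1)
    rw [h (-1)] at h2
    norm_num at h2
    linarith
  simpa using encard_image_le_of_monotoneOn (c := itinerary F N n)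
    (fun x _ y _ hxy k => Int.floor_mono (by gcongr; exact hmono k hxy))
    (fun k => ⌊N * F^[k] (-1)⌋) (2 * N) fun x hx k =>
      ⟨Int.floor_mono (by gcongr; exact hmono k hx.1), by
        refine (Int.floor_mono (mul_le_mul_of_nonneg_left (hmono k hx.2) N.cast_nonneg)).trans ?_
        rw [hone, mul_add, ← Int.floor_add_natCast]
        exact le_of_eq (congrArg _ (by push_cast; ring))⟩

theorem sepCount_inducedC_le {F : ℝ → ℝ} {g : UnitAddCircle → UnitAddCircle}
    (hF : IsLiftOf F g) (hg : Continuous g) (hsurj : g.Surjective) {N : ℕ} (hN : 0 < N) {ε : ℝ}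
    (hε : 1 / (N : ℝ) < ε) (n : ℕ) :
    sepCount (inducedC g hg) univ n ε ≤ (n * (2 * N) + 1) ^ 2 := by
  choose a b ha hab hb hA using fun A : Subcontinua UnitAddCircle =>
    exists_eq_image_Icc A.2.nonempty A.1.isCompact A.2.isPreconnected
  set S := itinerary F N n '' Icc (-1) 1
  refine sepCount_le_of_encard_image_le
    (fun A => (itinerary F N n (a A), itinerary F N n (b A))) ?_ ?_
  · have hS := encard_itinerary_image_le hF N n
    calc _ ≤ (S ×ˢ S).encard := encard_le_encard <| by
          rintro _ ⟨A, -, rfl⟩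
          exact ⟨mem_image_of_mem _ ⟨ha A, (hab A).trans (hb A)⟩,
            mem_image_of_mem _ ⟨(ha A).trans (hab A), hb A⟩⟩
      _ = S.encard * S.encard := encard_prod
      _ ≤ _ := by push_cast; rw [sq]; exact mul_le_mul' hS hS
  · rintro A - B - hAB
    obtain ⟨hα, hβ⟩ := Prod.ext_iff.mp hAB
    refine (dynDist_le (by positivity) fun k hk => ?_).trans_lt hε
    change Metric.hausdorffDist _ _ ≤ _
    rw [coe_inducedC_iterate, coe_inducedC_iterate, hA A, hA B,
      (hF.iterate k).image_image_Icc (hsurj.iterate k),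
      (hF.iterate k).image_image_Icc (hsurj.iterate k)]
    have hmono := (hF.1.iterate k).monotone
    exact (hausdorffDist_image_Icc_le (hmono (hab A)) (hmono (hab B))).trans <| max_le
      (abs_iterate_sub_lt_of_itinerary_eq hN hα ⟨k, hk⟩).le
      (abs_iterate_sub_lt_of_itinerary_eq hN hβ ⟨k, hk⟩).le

/-- for any orientation-preserving circle homeomorphism `f`,
`h_pol(C(f)) ≤ 2`. -/
theorem stmt_10 (f : UnitAddCircle ≃ₜ UnitAddCircle)
    (hop : OrientationPreserving (f : UnitAddCircle → UnitAddCircle)) :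
    hpol (inducedC (f : UnitAddCircle → UnitAddCircle) f.continuous) ≤ 2 := by
  obtain ⟨F, hF⟩ := hop
  refine iSup_le fun ⟨ε, hε⟩ => ?_
  obtain ⟨N, hN⟩ := exists_nat_one_div_lt hε
  have hN' : 1 / ((N + 1 : ℕ) : ℝ) < ε := by exact_mod_cast hN
  refine limsup_log_div_log_le (K := (3 * (N + 1) : ℝ) ^ 2) (d := 2)
    (one_le_pow₀ (by linarith [N.cast_nonneg (α := ℝ)])) ?_
  filter_upwards [eventually_ge_atTop 1] with n hn
  have hsep := sepCount_inducedC_le hF f.continuous f.surjective N.succ_pos hN' n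
  calc (sepCount _ _ n ε : ℝ) ≤ ((n * (2 * (N + 1)) + 1) ^ 2 : ℕ) := by exact_mod_cast hsep
    _ ≤ (3 * (N + 1) : ℝ) ^ 2 * (n : ℝ) ^ 2 := by
      rw [← mul_pow]
      push_cast
      gcongr
      have : (1 : ℝ) ≤ n := by exact_mod_cast hn
      nlinarith
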